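/- Let 𝔅 be a bornology with closed base on a metric space X. The following are equivalent: (1) X has the 𝔅ˢ-Hurewicz property; (2) X satisfies S_fin(𝒪_{𝔅ˢ}, 𝒪_{𝔅ˢ}^{gp}); (3) ONE has no winning strategy in the game G_fin(𝒪_{𝔅ˢ}, 𝒪_{𝔅ˢ}^{gp}). -/

import Mathlib

open Set Metric Filter

/-- A bornology on a metric space: an ideal of subsets covering `X`. -/
structure BornologyOn (X : Type*) [MetricSpace X] where
  sets : Set (Set X)
  union_mem : ∀ {A B : Set X}, A ∈ sets → B ∈ sets → A ∪ B ∈ sets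
  subset_mem : ∀ {A B : Set X}, A ∈ sets → B ⊆ A → B ∈ sets
  covers : ∀ x : X, ∃ A ∈ sets, x ∈ A

variable {X : Type*} [MetricSpace X]

/-- `𝔅` has a closed base: a cofinal subfamily consisting of closed sets. -/
def HasClosedBase (𝔅 : BornologyOn X) : Prop :=
  ∃ base ⊆ 𝔅.sets, (∀ C ∈ base, IsClosed C) ∧ ∀ A ∈ 𝔅.sets, ∃ C ∈ base, A ⊆ C

/-- The `δ`-enlargement `B^δ = ⋃_{x ∈ B} S(x, δ)`. -/
def enlarge (B : Set X) (δ : ℝ) : Set X := ⋃ x ∈ B, ball x δ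

/-- A `𝔅ˢ`-cover: `X ∉ 𝒰` and every `B ∈ 𝔅` has `B^δ ⊆ U` for some `U ∈ 𝒰`, `δ > 0`. -/
def IsBCover (𝔅 : BornologyOn X) (𝒰 : Set (Set X)) : Prop :=
  univ ∉ 𝒰 ∧ ∀ B ∈ 𝔅.sets, ∃ U ∈ 𝒰, ∃ δ > 0, enlarge B δ ⊆ U

/-- An open `𝔅ˢ`-cover. -/
def IsOpenBCover (𝔅 : BornologyOn X) (𝒰 : Set (Set X)) : Prop :=
  (∀ U ∈ 𝒰, IsOpen U) ∧ (∀ x : X, ∃ U ∈ 𝒰, x ∈ U) ∧ IsBCover 𝔅 𝒰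

/-- A `γ_{𝔅ˢ}`-cover (set form): infinite family of open sets such that for each `B ∈ 𝔅`
all but finitely many members contain some enlargement of `B`. -/
def IsGammaBCover (𝔅 : BornologyOn X) (𝒰 : Set (Set X)) : Prop :=
  𝒰.Infinite ∧ (∀ U ∈ 𝒰, IsOpen U) ∧
    ∀ B ∈ 𝔅.sets, {U ∈ 𝒰 | ¬ ∃ δ > 0, enlarge B δ ⊆ U}.Finite

/-- A `γ_{𝔅ˢ}`-cover given as a sequence `{Uₙ}`: infinite, open, and for each `B ∈ 𝔅`
there are `n₀` and `δₙ > 0` with `B^{δₙ} ⊆ Uₙ` for all `n ≥ n₀`. -/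
def IsGammaBSeq (𝔅 : BornologyOn X) (U : ℕ → Set X) : Prop :=
  (Set.range U).Infinite ∧ (∀ n, IsOpen (U n)) ∧
    ∀ B ∈ 𝔅.sets, ∃ n₀, ∀ n ≥ n₀, ∃ δ > 0, enlarge B δ ⊆ U n

/-- A `γ`-cover: infinite family of open sets, every point in all but finitely many members. -/
def IsGammaCover (𝒰 : Set (Set X)) : Prop :=
  𝒰.Infinite ∧ (∀ U ∈ 𝒰, IsOpen U) ∧ ∀ x : X, {U ∈ 𝒰 | x ∉ U}.Finite

/-- An open cover of `X`. -/
def IsOpenCover (𝒰 : Set (Set X)) : Prop :=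
  (∀ U ∈ 𝒰, IsOpen U) ∧ ∀ x : X, ∃ U ∈ 𝒰, x ∈ U

/-- The family `𝒪_{𝔅ˢ}` of countable open `𝔅ˢ`-covers. -/
def OBs (𝔅 : BornologyOn X) : Set (Set (Set X)) :=
  {𝒰 | 𝒰.Countable ∧ IsOpenBCover 𝔅 𝒰}

/-- The family `Γ_{𝔅ˢ}` of countable `γ_{𝔅ˢ}`-covers. -/
def GBs (𝔅 : BornologyOn X) : Set (Set (Set X)) :=
  {𝒰 | 𝒰.Countable ∧ IsGammaBCover 𝔅 𝒰}

/-- The family `𝒪` of countable open covers. -/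
def Ocov (X : Type*) [MetricSpace X] : Set (Set (Set X)) :=
  {𝒰 | 𝒰.Countable ∧ IsOpenCover 𝒰}

/-- The selection principle `S₁(𝒜, ℬ)`. -/
def S1 (𝒜 ℬ : Set (Set (Set X))) : Prop :=
  ∀ 𝒰 : ℕ → Set (Set X), (∀ n, 𝒰 n ∈ 𝒜) →
    ∃ sel : ℕ → Set X, (∀ n, sel n ∈ 𝒰 n) ∧ Set.range sel ∈ ℬ

/-- The selection principle `S_fin(𝒜, ℬ)`. -/
def Sfin (𝒜 ℬ : Set (Set (Set X))) : Prop :=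
  ∀ 𝒰 : ℕ → Set (Set X), (∀ n, 𝒰 n ∈ 𝒜) →
    ∃ 𝒱 : ℕ → Set (Set X), (∀ n, 𝒱 n ⊆ 𝒰 n ∧ (𝒱 n).Finite) ∧ (⋃ n, 𝒱 n) ∈ ℬ

/-- The selection principle `U_fin(𝒜, ℬ)`. -/
def Ufin (𝒜 ℬ : Set (Set (Set X))) : Prop :=
  ∀ 𝒰 : ℕ → Set (Set X), (∀ n, 𝒰 n ∈ 𝒜) →
    ∃ 𝒱 : ℕ → Set (Set X), (∀ n, 𝒱 n ⊆ 𝒰 n ∧ (𝒱 n).Finite) ∧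
      ((Set.range fun n => ⋃₀ 𝒱 n) ∈ ℬ ∨ ∃ n, ⋃₀ 𝒱 n = univ)

/-- ONE has a winning strategy in `G₁(𝒜, ℬ)`. -/
def OneWinsG1 (𝒜 ℬ : Set (Set (Set X))) : Prop :=
  ∃ σ : List (Set X) → Set (Set X),
    (∀ h, σ h ∈ 𝒜) ∧
    ∀ play : ℕ → Set X,
      (∀ n, play n ∈ σ (List.ofFn fun i : Fin n => play i.1)) →
      Set.range play ∉ ℬ

/-- ONE has a winning strategy in `G_fin(𝒜, ℬ)`. -/
def OneWinsGfin (𝒜 ℬ : Set (Set (Set X))) : Prop :=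
  ∃ σ : List (Set (Set X)) → Set (Set X),
    (∀ h, σ h ∈ 𝒜) ∧
    ∀ play : ℕ → Set (Set X),
      (∀ n, play n ⊆ σ (List.ofFn fun i : Fin n => play i.1) ∧ (play n).Finite) →
      (⋃ n, play n) ∉ ℬ

/-- The winning condition in the `𝔅ˢ`-Hurewicz game / property: every `B ∈ 𝔅` is
eventually `δ`-enlarged into some member of `𝒱ₙ`. -/
def HurSel (𝔅 : BornologyOn X) (𝒱 : ℕ → Set (Set X)) : Prop :=
  ∀ B ∈ 𝔅.sets, ∃ n₀, ∀ n ≥ n₀, ∃ δ > 0, ∃ U ∈ 𝒱 n, enlarge B δ ⊆ U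

/-- The strong `𝔅`-Hurewicz property. -/
def BsHurewicz (𝔅 : BornologyOn X) : Prop :=
  ∀ 𝒰 : ℕ → Set (Set X), (∀ n, 𝒰 n ∈ OBs 𝔅) →
    ∃ 𝒱 : ℕ → Set (Set X), (∀ n, 𝒱 n ⊆ 𝒰 n ∧ (𝒱 n).Finite) ∧ HurSel 𝔅 𝒱

/-- ONE has a winning strategy in the `𝔅ˢ`-Hurewicz game. -/
def OneWinsHurewicz (𝔅 : BornologyOn X) : Prop :=
  ∃ σ : List (Set (Set X)) → Set (Set X),
    (∀ h, σ h ∈ OBs 𝔅) ∧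
    ∀ play : ℕ → Set (Set X),
      (∀ n, play n ⊆ σ (List.ofFn fun i : Fin n => play i.1) ∧ (play n).Finite) →
      ¬ HurSel 𝔅 play

/-- A `𝔅ˢ`-groupable cover. -/
def BsGroupable (𝔅 : BornologyOn X) (𝒰 : Set (Set X)) : Prop :=
  ∃ 𝒢 : ℕ → Set (Set X), (∀ n, (𝒢 n).Finite) ∧
    (∀ m n, m ≠ n → Disjoint (𝒢 m) (𝒢 n)) ∧ (⋃ n, 𝒢 n) = 𝒰 ∧ HurSel 𝔅 𝒢

/-- The family `𝒪_{𝔅ˢ}^{gp}` of `𝔅ˢ`-groupable open covers. -/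
def OBsgp (𝔅 : BornologyOn X) : Set (Set (Set X)) :=
  {𝒰 | IsOpenCover 𝒰 ∧ BsGroupable 𝔅 𝒰}

/-- The basic `τ_𝔅ˢ` neighbourhood `[B, ε]ˢ(f)` in `C(X)`. -/
def sball (f : C(X, ℝ)) (B : Set X) (ε : ℝ) : Set C(X, ℝ) :=
  {g | ∃ δ > 0, ∀ x ∈ enlarge B δ, |f x - g x| < ε}

/-- The topology `τ_𝔅ˢ` of strong uniform convergence on `𝔅` on `C(X)`. -/
def tauBs (𝔅 : BornologyOn X) : TopologicalSpace C(X, ℝ) :=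
  TopologicalSpace.generateFrom
    {S | ∃ f : C(X, ℝ), ∃ B ∈ 𝔅.sets, ∃ ε > 0, S = sball f B ε}

/-- Countable `T`-tightness of a topological space. -/
def CountableTTightness {Y : Type*} (t : TopologicalSpace Y) : Prop :=
  ∀ ρ : Cardinal.{0}, ρ.IsRegular → Cardinal.aleph0 < ρ →
    ∀ A : Ordinal.{0} → Set Y, (∀ α β, α ≤ β → A α ⊆ A β) →
      (∀ α, α < ρ.ord → @IsClosed _ t (A α)) →
      @IsClosed _ t (⋃ α ∈ {α | α < ρ.ord}, A α)

/-!
Every open `𝔅ˢ`-cover has infinitely many members swallowing a given `B ∈ 𝔅` (otherwise add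
to `B` one point outside each of them), so it remains one after removing finitely many members.
Applying the Hurewicz property to the tails of an enumeration of a countable such cover gives
finite selections from later and later tails; cutting the enumeration into consecutive blocks,
each containing one selection, shows that the cover is groupable. So the union of Hurewicz
selections is groupable, which gives `S_fin`; and as ONE's strategy produces only countably many
covers along the plays in which TWO picks initial segments of enumerations, a single Hurewicz
selection from all of them is picked up along one play, defeating the strategy.
Conversely, `S_fin` applied to the covers by intersections `U₀ ∩ ⋯ ∩ Uₙ` gives a groupable cover
whose late groups consist of members of late rounds only; enlarging each member of the `n`-th
late group to a member of `𝒰ₙ` gives a Hurewicz selection.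
-/

lemma Set.InjOn.finite_inter_preimage {α : Type*} {𝒰 : Set α} {r : α → ℕ} (hr : InjOn r 𝒰)
    {S : Set ℕ} (hS : S.Finite) : (𝒰 ∩ r ⁻¹' S).Finite :=
  Set.Finite.of_finite_image (hS.subset (image_subset_iff.2 inter_subset_right))
    (hr.mono inter_subset_left)

lemma Set.Finite.exists_finite_subset_forall_subset {α : Type*} {𝒢 𝒰 : Set (Set α)}
    (h𝒢 : 𝒢.Finite) (h : ∀ W ∈ 𝒢, ∃ U ∈ 𝒰, W ⊆ U) :
    ∃ 𝒮 ⊆ 𝒰, 𝒮.Finite ∧ ∀ W ∈ 𝒢, ∃ U ∈ 𝒮, W ⊆ U := by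
  choose! f hf𝒰 hf using h
  exact ⟨f '' 𝒢, image_subset_iff.2 hf𝒰, h𝒢.image f,
    fun W hW => ⟨f W, mem_image_of_mem f hW, hf W hW⟩⟩

open Function in
lemma eventually_disjoint_of_pairwise_disjoint {α : Type*} {𝒢 : ℕ → Set α}
    (h𝒢 : Pairwise (Disjoint on 𝒢)) {S : Set α} (hS : S.Finite) :
    ∀ᶠ k in atTop, Disjoint (𝒢 k) S := by
  rw [← Nat.cofinite_eq_atTop, eventually_cofinite]
  refine (hS.biUnion fun s _ => (?_ : {k | s ∈ 𝒢 k}.Subsingleton).finite).subset ?_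
  · exact fun m hm n hn => by_contra fun hmn => disjoint_left.1 (h𝒢 hmn) hm hn
  · intro k hk
    obtain ⟨s, hs𝒢, hsS⟩ := not_disjoint_iff.1 hk
    exact mem_biUnion hsS hs𝒢

section FiniteIntersections

variable {α : Type*}

def finiteInters (𝒰 : ℕ → Set (Set α)) : ℕ → Set (Set α)
  | 0 => 𝒰 0
  | n + 1 => image2 (· ∩ ·) (finiteInters 𝒰 n) (𝒰 (n + 1))

lemma exists_superset_of_mem_finiteInters {𝒰 : ℕ → Set (Set α)} {m : ℕ} {W : Set α}
    (hW : W ∈ finiteInters 𝒰 m) {j : ℕ} (hj : j ≤ m) : ∃ U ∈ 𝒰 j, W ⊆ U := by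
  induction m generalizing W with
  | zero => exact ⟨W, Nat.le_zero.1 hj ▸ hW, subset_rfl⟩
  | succ m ih =>
    obtain ⟨V, hV, U, hU, rfl⟩ := hW
    rcases Nat.of_le_succ hj with hjm | rfl
    · obtain ⟨U', hU', hVU'⟩ := ih hV hjm
      exact ⟨U', hU', inter_subset_left.trans hVU'⟩
    · exact ⟨U, hU, inter_subset_right⟩

end FiniteIntersections

section Game

variable {α : Type*}

def IsGfinPlay (σ : List (Set α) → Set α) (play : ℕ → Set α) : Prop :=
  ∀ n, play n ⊆ σ (List.ofFn fun i : Fin n => play i.1) ∧ (play n).Finite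

/-- The position reached when TWO answers each position `p` by `move p b`, with the codes `b`
taken from `s`, most recent first. -/
def codedPosition (move : List (Set α) → ℕ → Set α) : List ℕ → List (Set α)
  | [] => []
  | b :: s => codedPosition move s ++ [move (codedPosition move s) b]

def codeBranch (next : List ℕ → ℕ) : ℕ → List ℕ
  | 0 => []
  | n + 1 => next (codeBranch next n) :: codeBranch next n

lemma length_codeBranch (next : List ℕ → ℕ) (n : ℕ) : (codeBranch next n).length = n := by
  induction n with
  | zero => rfl
  | succ n ih => simp [codeBranch, ih]

lemma ofFn_codeBranch (move : List (Set α) → ℕ → Set α) (next : List ℕ → ℕ) (n : ℕ) :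
    (List.ofFn fun i : Fin n =>
        move (codedPosition move (codeBranch next i)) (next (codeBranch next i))) =
      codedPosition move (codeBranch next n) := by
  induction n with
  | zero => rfl
  | succ n ih =>
    simp only [List.ofFn_succ', Fin.val_castSucc, Fin.val_last, ih, List.concat_eq_append]
    rfl

lemma exists_isGfinPlay_superset (σ : List (Set α) → Set α) (hσ : ∀ p, (σ p).Countable) :
    ∃ pos : ℕ → List (Set α), ∀ 𝒱 : ℕ → Set α, (∀ i, 𝒱 i ⊆ σ (pos i) ∧ (𝒱 i).Finite) →
      ∃ play, IsGfinPlay σ play ∧ ∃ idx : ℕ → ℕ, idx.Injective ∧ ∀ n, 𝒱 (idx n) ⊆ play n := by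
  choose r hr using fun p => countable_iff_exists_injOn.1 (hσ p)
  -- TWO only plays initial segments of the enumerations `r p`, so positions are coded by lists
  let move p b := σ p ∩ r p ⁻¹' Iic b
  refine ⟨fun i => codedPosition move (Denumerable.ofNat (List ℕ) i), fun 𝒱 h𝒱 => ?_⟩
  have hnext : ∀ s, ∃ b, 𝒱 (Encodable.encode s) ⊆ move (codedPosition move s) b := by
    intro s
    obtain ⟨h𝒱σ, h𝒱fin⟩ := h𝒱 (Encodable.encode s)
    simp only [Denumerable.ofNat_encode] at h𝒱σ
    obtain ⟨b, hb⟩ := (h𝒱fin.image (r _)).bddAbove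
    exact ⟨b, fun V hV => ⟨h𝒱σ hV, hb (mem_image_of_mem _ hV)⟩⟩
  choose next hnext using hnext
  refine ⟨fun n => move (codedPosition move (codeBranch next n)) (next (codeBranch next n)),
    fun n => ?_, fun n => Encodable.encode (codeBranch next n), fun m n hmn => ?_,
    fun n => hnext _⟩
  · rw [ofFn_codeBranch]
    exact ⟨inter_subset_left, (hr _).finite_inter_preimage (finite_Iic _)⟩
  · simpa [length_codeBranch] using congrArg List.length (Encodable.encode_injective hmn)

lemma sfin_of_not_oneWinsGfin {𝒜 ℬ : Set (Set (Set α))} (h : ¬ OneWinsGfin 𝒜 ℬ) :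
    Sfin 𝒜 ℬ := by
  intro 𝒰 h𝒰
  by_contra! hlose
  refine h ⟨fun p => 𝒰 p.length, fun p => h𝒰 _, fun play hplay => hlose play fun n => ?_⟩
  simpa only [List.length_ofFn] using hplay n

end Game

lemma BornologyOn.singleton_mem (𝔅 : BornologyOn X) (x : X) : {x} ∈ 𝔅.sets := by
  obtain ⟨A, hA, hx⟩ := 𝔅.covers x
  exact 𝔅.subset_mem hA (singleton_subset_iff.2 hx)

lemma BornologyOn.union_mem_of_finite (𝔅 : BornologyOn X) {B s : Set X} (hB : B ∈ 𝔅.sets)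
    (hs : s.Finite) : B ∪ s ∈ 𝔅.sets := by
  induction s, hs using Set.Finite.induction_on with
  | empty => simpa using hB
  | @insert a s _ _ ih =>
    rw [union_insert, insert_eq]
    exact 𝔅.union_mem (𝔅.singleton_mem a) ih

lemma enlarge_mono {B B' : Set X} {δ δ' : ℝ} (hB : B ⊆ B') (hδ : δ ≤ δ') :
    enlarge B δ ⊆ enlarge B' δ' :=
  biUnion_mono hB fun _ _ => ball_subset_ball hδ

lemma subset_enlarge {B : Set X} {δ : ℝ} (hδ : 0 < δ) : B ⊆ enlarge B δ :=
  fun _ hx => mem_biUnion hx (mem_ball_self hδ)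

section Bornology

variable {𝔅 : BornologyOn X}

section Covers

variable {𝒰 𝒱 : Set (Set X)}

lemma IsBCover.infinite_setOf_enlarge_subset (h : IsBCover 𝔅 𝒰) {B : Set X} (hB : B ∈ 𝔅.sets) :
    {U ∈ 𝒰 | ∃ δ > 0, enlarge B δ ⊆ U}.Infinite := by
  set 𝒲 := {U ∈ 𝒰 | ∃ δ > 0, enlarge B δ ⊆ U}
  intro hfin
  have hout : ∀ U ∈ 𝒲, ∃ x, x ∉ U := fun U hU =>
    not_forall.1 fun hU' => h.1 (eq_univ_of_forall hU' ▸ hU.1)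
  choose x hx using hout
  have := hfin.to_subtype
  obtain ⟨U, hU, δ, hδ, hBU⟩ :=
    h.2 _ (𝔅.union_mem_of_finite hB (finite_range fun U : 𝒲 => x U U.2))
  have hU𝒲 : U ∈ 𝒲 := ⟨hU, δ, hδ, (enlarge_mono subset_union_left le_rfl).trans hBU⟩
  exact hx U hU𝒲
    (hBU (subset_enlarge hδ (subset_union_right (mem_range_self (⟨U, hU𝒲⟩ : 𝒲)))))

lemma mem_OBs_of_isBCover (hc : 𝒰.Countable) (ho : ∀ U ∈ 𝒰, IsOpen U) (h : IsBCover 𝔅 𝒰) :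
    𝒰 ∈ OBs 𝔅 := by
  refine ⟨hc, ho, fun x => ?_, h⟩
  obtain ⟨U, hU, δ, hδ, hxU⟩ := h.2 _ (𝔅.singleton_mem x)
  exact ⟨U, hU, hxU (subset_enlarge hδ rfl)⟩

lemma diff_mem_OBs (h𝒰 : 𝒰 ∈ OBs 𝔅) {F : Set (Set X)} (hF : (𝒰 ∩ F).Finite) :
    𝒰 \ F ∈ OBs 𝔅 := by
  obtain ⟨hc, ho, -, hB⟩ := h𝒰
  refine mem_OBs_of_isBCover (hc.mono sdiff_subset) (fun U hU => ho U hU.1)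
    ⟨fun hu => hB.1 hu.1, fun B hB' => ?_⟩
  obtain ⟨U, ⟨hU, hBU⟩, hUF⟩ := ((hB.infinite_setOf_enlarge_subset hB').sdiff hF).nonempty
  exact ⟨U, ⟨hU, fun hUF' => hUF ⟨hU, hUF'⟩⟩, hBU⟩

lemma image2_inter_mem_OBs (h𝒰 : 𝒰 ∈ OBs 𝔅) (h𝒱 : 𝒱 ∈ OBs 𝔅) :
    image2 (· ∩ ·) 𝒰 𝒱 ∈ OBs 𝔅 := by
  obtain ⟨hc𝒰, ho𝒰, -, hu𝒰, hB𝒰⟩ := h𝒰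
  obtain ⟨hc𝒱, ho𝒱, -, -, hB𝒱⟩ := h𝒱
  refine mem_OBs_of_isBCover (hc𝒰.image2 hc𝒱 _) ?_ ⟨?_, fun B hB => ?_⟩
  · rintro _ ⟨U, hU, V, hV, rfl⟩
    exact (ho𝒰 U hU).inter (ho𝒱 V hV)
  · rintro ⟨U, hU, V, -, hUV⟩
    exact hu𝒰 (eq_univ_of_subset inter_subset_left hUV ▸ hU)
  · obtain ⟨U, hU, δ, hδ, hBU⟩ := hB𝒰 B hB
    obtain ⟨V, hV, ε, hε, hBV⟩ := hB𝒱 B hB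
    exact ⟨U ∩ V, mem_image2_of_mem hU hV, min δ ε, lt_min hδ hε,
      subset_inter ((enlarge_mono subset_rfl (min_le_left δ ε)).trans hBU)
        ((enlarge_mono subset_rfl (min_le_right δ ε)).trans hBV)⟩

end Covers

lemma finiteInters_mem_OBs {𝒰 : ℕ → Set (Set X)} (h𝒰 : ∀ n, 𝒰 n ∈ OBs 𝔅) (n : ℕ) :
    finiteInters 𝒰 n ∈ OBs 𝔅 := by
  induction n with
  | zero => exact h𝒰 0
  | succ n ih => exact image2_inter_mem_OBs ih (h𝒰 (n + 1))

section Selections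

variable {𝒱 𝒲 : ℕ → Set (Set X)}

lemma HurSel.comp_tendsto (h : HurSel 𝔅 𝒱) {k : ℕ → ℕ} (hk : Tendsto k atTop atTop) :
    HurSel 𝔅 fun n => 𝒱 (k n) := by
  intro B hB
  obtain ⟨n₀, hn₀⟩ := h B hB
  obtain ⟨N, hN⟩ := (hk.eventually_ge_atTop n₀).exists_forall_of_atTop
  exact ⟨N, fun n hn => hn₀ (k n) (hN n hn)⟩

lemma HurSel.mono (h : HurSel 𝔅 𝒱) (h𝒲 : ∀ n, ∀ V ∈ 𝒱 n, ∃ W ∈ 𝒲 n, V ⊆ W) :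
    HurSel 𝔅 𝒲 := by
  intro B hB
  obtain ⟨n₀, hn₀⟩ := h B hB
  refine ⟨n₀, fun n hn => ?_⟩
  obtain ⟨δ, hδ, V, hV, hBV⟩ := hn₀ n hn
  obtain ⟨W, hW, hVW⟩ := h𝒲 n V hV
  exact ⟨δ, hδ, W, hW, hBV.trans hVW⟩

lemma iUnion_mem_OBs {𝒰 : ℕ → Set (Set X)} (h𝒰 : ∀ n, 𝒰 n ∈ OBs 𝔅) (h𝒱 : ∀ n, 𝒱 n ⊆ 𝒰 n)
    (hsel : HurSel 𝔅 𝒱) : (⋃ n, 𝒱 n) ∈ OBs 𝔅 := by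
  refine mem_OBs_of_isBCover (countable_iUnion fun n => (h𝒰 n).1.mono (h𝒱 n)) ?_ ⟨?_, ?_⟩
  · simp only [mem_iUnion, forall_exists_index]
    exact fun U n hU => (h𝒰 n).2.1 U (h𝒱 n hU)
  · simp only [mem_iUnion, not_exists]
    exact fun n hU => (h𝒰 n).2.2.2.1 (h𝒱 n hU)
  · intro B hB
    obtain ⟨n₀, hn₀⟩ := hsel B hB
    obtain ⟨δ, hδ, U, hU, hBU⟩ := hn₀ n₀ le_rfl
    exact ⟨U, mem_iUnion_of_mem n₀ hU, δ, hδ, hBU⟩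

end Selections

lemma bsGroupable_of_rank_blocks {𝒰 : Set (Set X)} {r : Set X → ℕ} (hr : InjOn r 𝒰)
    {k : ℕ → ℕ} (hk : StrictMono k) (hk0 : k 0 = 0)
    (hsel : HurSel 𝔅 fun j => 𝒰 ∩ r ⁻¹' Ico (k j) (k (j + 1))) : BsGroupable 𝔅 𝒰 := by
  refine ⟨_, fun j => hr.finite_inter_preimage (finite_Ico _ _), fun m n hmn => ?_, ?_, hsel⟩
  · exact ((hk.monotone.pairwise_disjoint_on_Ico_succ hmn).preimage r).mono
      inter_subset_right inter_subset_right
  · have hcover : ⋃ j, Ico (k j) (k (j + 1)) = univ := by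
      simpa [hk0] using iUnion_Ico_map_succ_eq_Ici (fun j => hk.monotone (Nat.zero_le j))
        hk.not_bddAbove_range_of_wellFoundedLT
    rw [← inter_iUnion, ← preimage_iUnion, hcover, preimage_univ, inter_univ]

lemma bsGroupable_of_mem_OBs (hH : BsHurewicz 𝔅) {𝒰 : Set (Set X)} (h𝒰 : 𝒰 ∈ OBs 𝔅) :
    BsGroupable 𝔅 𝒰 := by
  obtain ⟨r, hr⟩ := countable_iff_exists_injOn.1 h𝒰.1
  obtain ⟨𝒱, h𝒱, hsel⟩ := hH (fun m => 𝒰 \ r ⁻¹' Iio m)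
    fun m => diff_mem_OBs h𝒰 (hr.finite_inter_preimage (finite_Iio m))
  have hbound : ∀ m, ∃ N, ∀ U ∈ 𝒱 m, r U < N := fun m =>
    let ⟨N, hN⟩ := ((h𝒱 m).2.image r).bddAbove
    ⟨N + 1, fun U hU => Nat.lt_succ_of_le (hN (mem_image_of_mem r hU))⟩
  choose N hN using hbound
  -- the block `[k j, k (j + 1))` contains the ranks of the selection from the `k j`-th tail
  let k : ℕ → ℕ := fun j => Nat.rec 0 (fun _ kj => max (kj + 1) (N kj)) j
  have hk : StrictMono k := strictMono_nat_of_lt_succ fun j => Nat.lt_of_lt_of_le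
    (Nat.lt_succ_self (k j)) (le_max_left _ (N (k j)))
  refine bsGroupable_of_rank_blocks hr hk rfl ((hsel.comp_tendsto hk.tendsto_atTop).mono ?_)
  intro j U hU
  obtain ⟨hU𝒰, hUk⟩ := (h𝒱 (k j)).1 hU
  exact ⟨U, ⟨hU𝒰, not_lt.1 hUk, (hN (k j) U hU).trans_le (le_max_right _ _)⟩, subset_rfl⟩

lemma iUnion_mem_OBsgp (hH : BsHurewicz 𝔅) {𝒰 𝒱 : ℕ → Set (Set X)}
    (h𝒰 : ∀ n, 𝒰 n ∈ OBs 𝔅) (h𝒱 : ∀ n, 𝒱 n ⊆ 𝒰 n) (hsel : HurSel 𝔅 𝒱) :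
    (⋃ n, 𝒱 n) ∈ OBsgp 𝔅 :=
  have h := iUnion_mem_OBs h𝒰 h𝒱 hsel
  ⟨⟨h.2.1, h.2.2.1⟩, bsGroupable_of_mem_OBs hH h⟩

lemma sfin_of_bsHurewicz (hH : BsHurewicz 𝔅) : Sfin (OBs 𝔅) (OBsgp 𝔅) := fun 𝒰 h𝒰 =>
  let ⟨𝒱, h𝒱, hsel⟩ := hH 𝒰 h𝒰
  ⟨𝒱, h𝒱, iUnion_mem_OBsgp hH h𝒰 (fun n => (h𝒱 n).1) hsel⟩

lemma not_oneWinsGfin_of_bsHurewicz (hH : BsHurewicz 𝔅) :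
    ¬ OneWinsGfin (OBs 𝔅) (OBsgp 𝔅) := by
  rintro ⟨σ, hσ, hwin⟩
  obtain ⟨pos, hpos⟩ := exists_isGfinPlay_superset σ fun p => (hσ p).1
  obtain ⟨𝒱, h𝒱, hsel⟩ := hH (fun i => σ (pos i)) fun i => hσ _
  obtain ⟨play, hplay, idx, hidx, h𝒱play⟩ := hpos 𝒱 h𝒱
  have hplay_sel : HurSel 𝔅 play :=
    (hsel.comp_tendsto hidx.nat_tendsto_atTop).mono fun n V hV => ⟨V, h𝒱play n hV, subset_rfl⟩
  exact hwin play hplay (iUnion_mem_OBsgp hH (fun n => hσ _) (fun n => (hplay n).1) hplay_sel)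

lemma bsHurewicz_of_sfin (hS : Sfin (OBs 𝔅) (OBsgp 𝔅)) : BsHurewicz 𝔅 := by
  intro 𝒰 h𝒰
  obtain ⟨𝒱, h𝒱, -, 𝒢, h𝒢fin, h𝒢disj, h𝒢union, h𝒢sel⟩ := hS _ (finiteInters_mem_OBs h𝒰)
  have hlate : ∀ n, ∃ k, n ≤ k ∧ Disjoint (𝒢 k) (⋃ m < n, 𝒱 m) := fun n =>
    ((eventually_ge_atTop n).and (eventually_disjoint_of_pairwise_disjoint h𝒢disj
      ((finite_Iio n).biUnion fun m _ => (h𝒱 m).2))).exists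
  choose k hnk hk using hlate
  -- a member of a late group belongs to `finiteInters 𝒰 m` for some `m ≥ n`
  have hrefine : ∀ n, ∀ W ∈ 𝒢 (k n), ∃ U ∈ 𝒰 n, W ⊆ U := by
    intro n W hW
    obtain ⟨m, hm⟩ := mem_iUnion.1 (h𝒢union ▸ mem_iUnion_of_mem (k n) hW)
    have hnm : n ≤ m := not_lt.1 fun hmn => disjoint_left.1 (hk n) hW (mem_biUnion hmn hm)
    exact exists_superset_of_mem_finiteInters ((h𝒱 m).1 hm) hnm
  choose 𝒮 h𝒮𝒰 h𝒮fin h𝒮 using fun n =>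
    (h𝒢fin (k n)).exists_finite_subset_forall_subset (hrefine n)
  exact ⟨𝒮, fun n => ⟨h𝒮𝒰 n, h𝒮fin n⟩,
    (h𝒢sel.comp_tendsto (tendsto_atTop_mono hnk tendsto_id)).mono h𝒮⟩

end Bornology

theorem stmt16_general (𝔅 : BornologyOn X) :
    (BsHurewicz 𝔅 ↔ Sfin (OBs 𝔅) (OBsgp 𝔅)) ∧
    (BsHurewicz 𝔅 ↔ ¬ OneWinsGfin (OBs 𝔅) (OBsgp 𝔅)) :=
  ⟨⟨sfin_of_bsHurewicz, bsHurewicz_of_sfin⟩,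
    ⟨not_oneWinsGfin_of_bsHurewicz, fun h => bsHurewicz_of_sfin (sfin_of_not_oneWinsGfin h)⟩⟩

theorem stmt16 (𝔅 : BornologyOn X) (hcb : HasClosedBase 𝔅) :
    (BsHurewicz 𝔅 ↔ Sfin (OBs 𝔅) (OBsgp 𝔅)) ∧
    (BsHurewicz 𝔅 ↔ ¬ OneWinsGfin (OBs 𝔅) (OBsgp 𝔅)) :=
  stmt16_general 𝔅
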